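/- Let d, N be positive integers, let P ∈ ℝ^{N×N} be an orthogonal projection matrix (P² = P and Pᵀ = P), and let k₁ ∈ ℤ^d. Define the matrix-valued filter H : ℤ^d → ℝ^{N×N} by H[·] = (I_N − P) δ[·] + P δ[·−k₁]. Then (H^{T∨} ∗ H)[k] = I_N δ[k] for all k ∈ ℤ^d, and consequently the convolution operator T_H : ℓ₂^N(ℤ^d) → ℓ₂^N(ℤ^d), x ↦ H ∗ x, is an isometry (a Parseval projection-based filter). -/

import Mathlib

/-! With `Q = 1 - P`, the filter is `H = Q δ₀ + P δ_{k₁}` and the pair `(Q, P)` satisfies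
`Qᵀ P = 0` and `Qᵀ Q + Pᵀ P = 1`: the first identity kills the cross terms of the
autocorrelation, the second turns its zero-lag term into the identity. For the isometry,
`(H ∗ x)[k] = Q x[k] + P x[k - k₁]` is an orthogonal sum, so after undoing the shift in the
second sum `‖H ∗ x‖² = ∑ ‖Q x[k]‖² + ∑ ‖P x[k]‖² = ‖x‖²`. -/

open Matrix

section TwoTapFilter

variable {M R G : Type*} [AddGroup G] [DecidableEq G]

def twoTapFilter [Zero M] [Add M] (a b : M) (k₁ m : G) : M :=
  (if m = 0 then a else 0) + (if m = k₁ then b else 0)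

theorem hasSum_twoTapFilter [AddCommMonoid M] [TopologicalSpace M] [ContinuousAdd M]
    (a b : M) (k₁ : G) : HasSum (twoTapFilter a b k₁) (a + b) :=
  (hasSum_ite_eq 0 a).add (hasSum_ite_eq k₁ b)

variable [Ring R] [StarRing R] {a b : R} {k₁ : G}

theorem star_twoTapFilter_mul_add (hab : star a * b = 0) (m k : G) :
    star (twoTapFilter a b k₁ m) * twoTapFilter a b k₁ (m + k) =
      if k = 0 then twoTapFilter (star a * a) (star b * b) k₁ m else 0 := by
  have hba : star b * a = 0 := by simpa using congrArg star hab
  -- for `k ≠ 0` the two factors are taps at different positions, so only cross terms survive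
  unfold twoTapFilter
  split_ifs <;> simp_all [add_mul, mul_add]

theorem hasSum_star_twoTapFilter_mul_add [TopologicalSpace R] [ContinuousAdd R]
    (hab : star a * b = 0) (hunit : star a * a + star b * b = 1) (k : G) :
    HasSum (fun m => star (twoTapFilter a b k₁ m) * twoTapFilter a b k₁ (m + k))
      (if k = 0 then 1 else 0) := by
  simp_rw [star_twoTapFilter_mul_add hab]
  split_ifs
  · exact hunit ▸ hasSum_twoTapFilter _ _ k₁
  · exact hasSum_zero

end TwoTapFilter

theorem hasSum_twoTapFilter_mulVec {ι R G : Type*} [Fintype ι] [CommSemiring R]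
    [TopologicalSpace R] [ContinuousAdd R] [AddGroup G] [DecidableEq G] (A B : Matrix ι ι R) (k₁ k : G) (y : G → ι → R) (i : ι) :
    HasSum (fun m => ∑ n, twoTapFilter A B k₁ m i n * y (k - m) n)
      ((A *ᵥ y k) i + (B *ᵥ y (k - k₁)) i) := by
  convert hasSum_twoTapFilter ((A *ᵥ y k) i) ((B *ᵥ y (k - k₁)) i) k₁ using 1
  ext m
  unfold twoTapFilter
  split_ifs <;> simp_all [add_mul, Finset.sum_add_distrib, mulVec, dotProduct]

namespace IsStarProjection

variable {R : Type*} [Ring R] [StarRing R] {p : R}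

theorem star_one_sub_mul_self (hp : IsStarProjection p) : star (1 - p) * p = 0 := by
  rw [hp.one_sub.isSelfAdjoint.star_eq, hp.one_sub_mul_self]

theorem star_one_sub_mul_one_sub_add_star_mul_self (hp : IsStarProjection p) :
    star (1 - p) * (1 - p) + star p * p = 1 := by
  rw [hp.one_sub.isSelfAdjoint.star_eq, hp.isSelfAdjoint.star_eq, hp.one_sub.isIdempotentElem.eq,
    hp.isIdempotentElem.eq, sub_add_cancel]

end IsStarProjection

section

variable {α : Type*} {E : α → Type*} [∀ i, NormedAddCommGroup (E i)]

theorem memℓp_two_iff {f : ∀ i, E i} : Memℓp f 2 ↔ Summable fun i => ‖f i‖ ^ 2 := by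
  simpa using memℓp_gen_iff (p := 2) (f := f) (by norm_num)

theorem lp.norm_sq_eq_tsum (f : lp E 2) : ‖f‖ ^ 2 = ∑' i, ‖f i‖ ^ 2 := by
  simpa using lp.norm_rpow_eq_tsum (p := 2) (by norm_num) f

theorem lp.hasSum_norm_sq (f : lp E 2) : HasSum (fun i => ‖f i‖ ^ 2) (‖f‖ ^ 2) :=
  norm_sq_eq_tsum f ▸ (memℓp_two_iff.mp f.2).hasSum

end

namespace ContinuousLinearMap

variable {𝕜 E : Type*} [RCLike 𝕜] [NormedAddCommGroup E] [InnerProductSpace 𝕜 E] [CompleteSpace E]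
  {a b : E →L[𝕜] E}

theorem inner_apply_eq_zero_of_star_mul_eq_zero (hab : star a * b = 0) (v w : E) :
    inner 𝕜 (a v) (b w) = 0 := by
  rw [← adjoint_inner_right, ← star_eq_adjoint, ← mul_apply_eq_comp, hab, _root_.zero_apply,
    inner_zero_right]

theorem norm_sq_add_norm_sq_of_star_mul_add_eq_one (hunit : star a * a + star b * b = 1)
    (v : E) : ‖a v‖ ^ 2 + ‖b v‖ ^ 2 = ‖v‖ ^ 2 := by
  calc ‖a v‖ ^ 2 + ‖b v‖ ^ 2 = RCLike.re (inner 𝕜 v ((star a * a + star b * b) v)) := by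
        simp [apply_norm_sq_eq_inner_adjoint_right, star_eq_adjoint, inner_add_right, mul_def]
    _ = ‖v‖ ^ 2 := by rw [hunit, one_apply_eq_self, inner_self_eq_norm_sq]

end ContinuousLinearMap

open ContinuousLinearMap in
theorem lp.exists_apply_add_apply_shift_norm_eq {G 𝕜 E : Type*} [AddGroup G] [RCLike 𝕜]
    [NormedAddCommGroup E] [InnerProductSpace 𝕜 E] [CompleteSpace E] {a b : E →L[𝕜] E}
    (hab : star a * b = 0) (hunit : star a * a + star b * b = 1)
    (x : lp (fun _ : G => E) 2) (k₁ : G) :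
    ∃ u : lp (fun _ : G => E) 2, (∀ k, u k = a (x k) + b (x (k - k₁))) ∧ ‖u‖ = ‖x‖ := by
  have hsplit k := norm_sq_add_norm_sq_of_star_mul_add_eq_one hunit (x k)
  have hx := lp.hasSum_norm_sq x
  have ha : Summable fun k => ‖a (x k)‖ ^ 2 :=
    hx.summable.of_nonneg_of_le (fun _ => by positivity)
      (fun k => by linarith [hsplit k, sq_nonneg ‖b (x k)‖])
  have hb : Summable fun k => ‖b (x k)‖ ^ 2 :=
    hx.summable.of_nonneg_of_le (fun _ => by positivity)
      (fun k => by linarith [hsplit k, sq_nonneg ‖a (x k)‖])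
  have hpyth k : ‖a (x k) + b (x (k - k₁))‖ ^ 2 = ‖a (x k)‖ ^ 2 + ‖b (x (k - k₁))‖ ^ 2 := by
    simpa only [sq] using norm_add_sq_eq_norm_sq_add_norm_sq_of_inner_eq_zero _ _
      (inner_apply_eq_zero_of_star_mul_eq_zero hab (x k) (x (k - k₁)))
  have hshift : HasSum (fun k => ‖b (x (k - k₁))‖ ^ 2) (∑' k, ‖b (x k)‖ ^ 2) :=
    (Equiv.subRight k₁).hasSum_iff.mpr hb.hasSum
  have htotal : ∑' k, ‖a (x k)‖ ^ 2 + ∑' k, ‖b (x k)‖ ^ 2 = ‖x‖ ^ 2 := by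
    rw [← ha.tsum_add hb, ← hx.tsum_eq]
    exact tsum_congr hsplit
  have hu : HasSum (fun k => ‖a (x k) + b (x (k - k₁))‖ ^ 2) (‖x‖ ^ 2) := by
    simpa only [hpyth, htotal] using ha.hasSum.add hshift
  refine ⟨⟨_, memℓp_two_iff.mpr hu.summable⟩, fun _ => rfl, ?_⟩
  rw [← sq_eq_sq₀ (norm_nonneg _) (norm_nonneg _), lp.norm_sq_eq_tsum, hu.tsum_eq]

theorem parseval_projection_module_general
    (d N : ℕ)
    (P : Matrix (Fin N) (Fin N) ℝ)
    (hP_idem : P * P = P) (hP_symm : Pᵀ = P)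
    (k₁ : Fin d → ℤ)
    (H : (Fin d → ℤ) → Matrix (Fin N) (Fin N) ℝ)
    (hH : ∀ k : Fin d → ℤ,
      H k = (if k = 0 then (1 : Matrix (Fin N) (Fin N) ℝ) - P else 0) +
        (if k = k₁ then P else 0)) :
    (∀ (k : Fin d → ℤ) (n n' : Fin N),
      ∑' m : Fin d → ℤ, ((H m)ᵀ * H (m + k)) n n' =
        if k = 0 then (1 : Matrix (Fin N) (Fin N) ℝ) n n' else 0) ∧
    (∀ x : lp (fun _ : Fin d → ℤ => EuclideanSpace ℝ (Fin N)) 2,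
      ∃ u : lp (fun _ : Fin d → ℤ => EuclideanSpace ℝ (Fin N)) 2,
        (∀ (k : Fin d → ℤ) (i : Fin N),
          u k i = ∑' m : Fin d → ℤ, ∑ n : Fin N, H m i n * x (k - m) n) ∧
        ‖u‖ = ‖x‖) := by
  obtain rfl : H = twoTapFilter (1 - P) P k₁ := funext hH
  have hP : IsStarProjection P :=
    ⟨hP_idem, by rwa [IsSelfAdjoint, star_eq_conjTranspose, conjTranspose_eq_transpose_of_trivial]⟩
  have hab := hP.star_one_sub_mul_self
  have hunit := hP.star_one_sub_mul_one_sub_add_star_mul_self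
  refine ⟨fun k n n' => ?_, fun x => ?_⟩
  · have h := hasSum_star_twoTapFilter_mul_add (k₁ := k₁) hab hunit k
    simp only [star_eq_conjTranspose, conjTranspose_eq_transpose_of_trivial] at h
    exact ((Pi.hasSum.mp (Pi.hasSum.mp h n) n').tsum_eq.trans (by split_ifs <;> rfl))
  · obtain ⟨u, hu, hnorm⟩ := lp.exists_apply_add_apply_shift_norm_eq
      (a := toEuclideanCLM (𝕜 := ℝ) (1 - P)) (b := toEuclideanCLM (𝕜 := ℝ) P)
      (by rw [← map_star, ← map_mul, hab, map_zero])
      (by rw [← map_star, ← map_star, ← map_mul, ← map_mul, ← map_add, hunit, map_one]) x k₁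
    refine ⟨u, fun k i => ?_, hnorm⟩
    rw [hu, (hasSum_twoTapFilter_mulVec (1 - P) P k₁ k (fun j => WithLp.ofLp (x j)) i).tsum_eq]
    rfl

/-- Let `P ∈ ℝ^{N×N}` be an orthogonal projection matrix (`P² = P`,
`Pᵀ = P`) and `k₁ ∈ ℤ^d`. Define `H[·] = (I_N − P) δ[·] + P δ[·−k₁]`. Then
`(H^{T∨} ∗ H)[k] = I_N δ[k]` for all `k`, and consequently the convolution operator
`T_H : ℓ₂^N(ℤ^d) → ℓ₂^N(ℤ^d)` is an isometry (a Parseval projection-based filter). -/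
theorem parseval_projection_module
    (d N : ℕ) (hd : 0 < d) (hN : 0 < N)
    (P : Matrix (Fin N) (Fin N) ℝ)
    (hP_idem : P * P = P) (hP_symm : Pᵀ = P)
    (k₁ : Fin d → ℤ)
    (H : (Fin d → ℤ) → Matrix (Fin N) (Fin N) ℝ)
    (hH : ∀ k : Fin d → ℤ,
      H k = (if k = 0 then (1 : Matrix (Fin N) (Fin N) ℝ) - P else 0) +
        (if k = k₁ then P else 0)) :
    (∀ (k : Fin d → ℤ) (n n' : Fin N),
      ∑' m : Fin d → ℤ, ((H m)ᵀ * H (m + k)) n n' =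
        if k = 0 then (1 : Matrix (Fin N) (Fin N) ℝ) n n' else 0) ∧
    (∀ x : lp (fun _ : Fin d → ℤ => EuclideanSpace ℝ (Fin N)) 2,
      ∃ u : lp (fun _ : Fin d → ℤ => EuclideanSpace ℝ (Fin N)) 2,
        (∀ (k : Fin d → ℤ) (i : Fin N),
          u k i = ∑' m : Fin d → ℤ, ∑ n : Fin N, H m i n * x (k - m) n) ∧
        ‖u‖ = ‖x‖) :=
  parseval_projection_module_general d N P hP_idem hP_symm k₁ H hH
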